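/- arXiv:2109.01338 — 7 statements merged into one kernel-verified Lean document; each statement's English description precedes it below -/
import Mathlib

section
/- Let s_1, ..., s_n be positive real numbers and let M, N, m, n', k > 0 satisfy k·m < 1 and k·n' > 1. Then ((1/n)Σ s_i)·[M·((1/n)Σ s_i)^m + N·((1/n)Σ s_i)^{n'}]^k ≤ (1/n)·Σ_{i=1}^n s_i·(M·s_i^m + N·s_i^{n'})^k. -/
/-!
With `p = m + 1/k` and `q = n' + 1/k` one has `x (M x^m + N x^n')^k = (M x^p + N x^q)^k`, and
`k p, k q ≥ 1`. For `u = M x^p + N x^q`, the sign of `(u^k)''` is that of `u u'' + (k - 1) u'²`,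
which is a quadratic form in `(M x^p, N x^q)` with nonnegative coefficients once `k p, k q ≥ 1`.
So `x ↦ x (M x^m + N x^n')^k` is convex on `(0, ∞)`, and the inequality is Jensen's inequality
for it with equal weights.
-/

open Set Real

lemma hasDerivAt_mul_rpow_add_mul_rpow (M N p q : ℝ) {x : ℝ} (hx : 0 < x) :
    HasDerivAt (fun y => M * y ^ p + N * y ^ q)
      (M * p * x ^ (p - 1) + N * q * x ^ (q - 1)) x :=
  (((hasDerivAt_rpow_const (Or.inl hx.ne')).const_mul M).add
    ((hasDerivAt_rpow_const (Or.inl hx.ne')).const_mul N)).congr_deriv (by ring)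

/-- With `A = M x^p`, `B = N x^q` and `u = A + B`, the left side is `x² (u u'' + (k - 1) u'²)`. -/
lemma rpow_convexity_form_nonneg {A B p q k : ℝ} (hA : 0 ≤ A) (hB : 0 ≤ B) (hp : 0 ≤ p)
    (hq : 0 ≤ q) (hkp : 1 ≤ k * p) (hkq : 1 ≤ k * q) :
    0 ≤ (A + B) * (p * (p - 1) * A + q * (q - 1) * B) + (k - 1) * (p * A + q * B) ^ 2 := by
  have hP : 0 ≤ p * (k * p - 1) := mul_nonneg hp (sub_nonneg.2 hkp)
  have hQ : 0 ≤ q * (k * q - 1) := mul_nonneg hq (sub_nonneg.2 hkq)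
  have hcross : 0 ≤ q * (k * p - 1) + p * (k * q - 1) + (p - q) ^ 2 := by
    have := mul_nonneg hq (sub_nonneg.2 hkp)
    have := mul_nonneg hp (sub_nonneg.2 hkq)
    positivity
  calc 0 ≤ A ^ 2 * (p * (k * p - 1)) + B ^ 2 * (q * (k * q - 1))
        + A * B * (q * (k * p - 1) + p * (k * q - 1) + (p - q) ^ 2) := by positivity
    _ = _ := by ring

lemma convexOn_mul_rpow_add_mul_rpow_rpow {M N p q k : ℝ} (hM : 0 < M) (hN : 0 < N)
    (hk : 0 < k) (hkp : 1 ≤ k * p) (hkq : 1 ≤ k * q) :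
    ConvexOn ℝ (Ioi 0) (fun x => (M * x ^ p + N * x ^ q) ^ k) := by
  set u : ℝ → ℝ := fun x => M * x ^ p + N * x ^ q
  set u' : ℝ → ℝ := fun x => M * p * x ^ (p - 1) + N * q * x ^ (q - 1)
  have hu : ∀ x ∈ Ioi (0 : ℝ), 0 < u x := fun x (hx : 0 < x) => by positivity
  have hu' : ∀ x ∈ Ioi (0 : ℝ), HasDerivAt u (u' x) x := fun x hx =>
    hasDerivAt_mul_rpow_add_mul_rpow M N p q hx
  have hu'' : ∀ x ∈ Ioi (0 : ℝ), HasDerivAt u'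
      (M * p * (p - 1) * x ^ (p - 1 - 1) + N * q * (q - 1) * x ^ (q - 1 - 1)) x := fun x hx =>
    hasDerivAt_mul_rpow_add_mul_rpow (M * p) (N * q) (p - 1) (q - 1) hx
  have hf' : ∀ x ∈ Ioi (0 : ℝ), HasDerivAt (fun x => u x ^ k) (u' x * k * u x ^ (k - 1)) x :=
    fun x hx => (hu' x hx).rpow_const (Or.inl (hu x hx).ne')
  have hf'' : ∀ x ∈ Ioi (0 : ℝ), HasDerivAt (fun x => u' x * k * u x ^ (k - 1))
      ((M * p * (p - 1) * x ^ (p - 1 - 1) + N * q * (q - 1) * x ^ (q - 1 - 1)) * k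
          * u x ^ (k - 1) + u' x * k * (u' x * (k - 1) * u x ^ (k - 1 - 1))) x :=
    fun x hx => ((hu'' x hx).mul_const k).mul ((hu' x hx).rpow_const (Or.inl (hu x hx).ne'))
  refine convexOn_of_hasDerivWithinAt2_nonneg (convex_Ioi 0)
    (fun x hx => (hf' x hx).continuousAt.continuousWithinAt)
    (by rw [interior_Ioi]; exact fun x hx => (hf' x hx).hasDerivWithinAt)
    (by rw [interior_Ioi]; exact fun x hx => (hf'' x hx).hasDerivWithinAt) ?_
  rw [interior_Ioi]
  intro x (hx : 0 < x)
  have hp : 0 ≤ p := nonneg_of_mul_nonneg_right (by linarith) hk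
  have hq : 0 ≤ q := nonneg_of_mul_nonneg_right (by linarith) hk
  have hpow : ∀ r : ℝ, x ^ (r - 1) = x ^ r * x⁻¹ ∧ x ^ (r - 1 - 1) = x ^ r * x⁻¹ ^ 2 := fun r => by
    simp only [rpow_sub hx, rpow_one, div_eq_mul_inv, true_and]; ring
  have hu_pow : u x ^ (k - 1) = u x ^ (k - 1 - 1) * u x := by
    rw [← rpow_add_one (hu x hx).ne', sub_add_cancel]
  have hform := rpow_convexity_form_nonneg (A := M * x ^ p) (B := N * x ^ q) (k := k)
    (by positivity) (by positivity) hp hq hkp hkq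
  have hfac : 0 ≤ k * u x ^ (k - 1 - 1) * x⁻¹ ^ 2 := by have := hu x hx; positivity
  refine (mul_nonneg hfac hform).trans_eq ?_
  rw [hu_pow, (hpow p).2, (hpow q).2]
  simp only [u', (hpow p).1, (hpow q).1]
  ring

lemma mul_rpow_add_inv_add_mul_rpow_add_inv_rpow {M N m n' k x : ℝ} (hM : 0 ≤ M) (hN : 0 ≤ N)
    (hk : k ≠ 0) (hx : 0 < x) :
    (M * x ^ (m + k⁻¹) + N * x ^ (n' + k⁻¹)) ^ k = x * (M * x ^ m + N * x ^ n') ^ k := by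
  have factor : M * x ^ (m + k⁻¹) + N * x ^ (n' + k⁻¹) = x ^ k⁻¹ * (M * x ^ m + N * x ^ n') := by
    rw [rpow_add hx, rpow_add hx]; ring
  rw [factor, mul_rpow (by positivity) (by positivity), ← rpow_mul hx.le, inv_mul_cancel₀ hk,
    rpow_one]

lemma convexOn_mul_mul_rpow_add_mul_rpow_rpow {M N m n' k : ℝ} (hM : 0 < M) (hN : 0 < N)
    (hm : 0 ≤ m) (hn' : 0 ≤ n') (hk : 0 < k) :
    ConvexOn ℝ (Ioi 0) (fun x => x * (M * x ^ m + N * x ^ n') ^ k) := by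
  have hkm : 1 ≤ k * (m + k⁻¹) := by rw [mul_add, mul_inv_cancel₀ hk.ne']; nlinarith
  have hkn' : 1 ≤ k * (n' + k⁻¹) := by rw [mul_add, mul_inv_cancel₀ hk.ne']; nlinarith
  refine (convexOn_mul_rpow_add_mul_rpow_rpow hM hN hk hkm hkn').congr fun x (hx : 0 < x) => ?_
  exact mul_rpow_add_inv_add_mul_rpow_add_inv_rpow hM.le hN.le hk.ne' hx

lemma ConvexOn.map_mean_le {ι : Type*} [Fintype ι] [Nonempty ι] {s : Set ℝ} {f : ℝ → ℝ}
    (hf : ConvexOn ℝ s f) {x : ι → ℝ} (hx : ∀ i, x i ∈ s) :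
    f ((1 / (Fintype.card ι : ℝ)) * ∑ i, x i) ≤ (1 / (Fintype.card ι : ℝ)) * ∑ i, f (x i) := by
  have hw : ∑ _i : ι, 1 / (Fintype.card ι : ℝ) = 1 := by
    rw [Finset.sum_const, Finset.card_univ, nsmul_eq_mul, mul_one_div_cancel (by positivity)]
  simpa only [smul_eq_mul, ← Finset.mul_sum] using
    hf.map_sum_le (fun _ _ => by positivity) hw (fun i _ => hx i)

theorem jensen_type_inequality_general (n : ℕ) (hn : 0 < n) (s : Fin n → ℝ) (hs : ∀ i, 0 < s i)
    (M N m n' k : ℝ) (hM : 0 < M) (hN : 0 < N) (hm : 0 < m) (hn' : 0 < n') (hk : 0 < k) :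
    ((1 / (n : ℝ)) * ∑ i, s i) *
        (M * ((1 / (n : ℝ)) * ∑ i, s i) ^ m + N * ((1 / (n : ℝ)) * ∑ i, s i) ^ n') ^ k
      ≤ (1 / (n : ℝ)) * ∑ i, s i * (M * s i ^ m + N * s i ^ n') ^ k := by
  have : Nonempty (Fin n) := Fin.pos_iff_nonempty.mp hn
  simpa only [Fintype.card_fin] using
    (convexOn_mul_mul_rpow_add_mul_rpow_rpow hM hN hm.le hn'.le hk).map_mean_le hs

/-- Jensen-type inequality (Lemma 6 of the paper). -/
theorem jensen_type_inequality (n : ℕ) (hn : 0 < n) (s : Fin n → ℝ) (hs : ∀ i, 0 < s i)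
    (M N m n' k : ℝ) (hM : 0 < M) (hN : 0 < N) (hm : 0 < m) (hn' : 0 < n') (hk : 0 < k)
    (hkm : k * m < 1) (hkn : 1 < k * n') :
    ((1 / (n : ℝ)) * ∑ i, s i) *
        (M * ((1 / (n : ℝ)) * ∑ i, s i) ^ m + N * ((1 / (n : ℝ)) * ∑ i, s i) ^ n') ^ k
      ≤ (1 / (n : ℝ)) * ∑ i, s i * (M * s i ^ m + N * s i ^ n') ^ k :=
  jensen_type_inequality_general n hn s hs M N m n' k hM hN hm hn' hk
end

section
/- Let V : [t_0, ∞) → R_{≥0} be differentiable with V(t_0) = V_0 > 0 and suppose V'(t) ≤ −(1/T_s)·ψ(V(t)) whenever V(t) > 0, where ψ(ℓ) = φ(|ℓ|)^{-1}·sign(ℓ) and φ : R_{≥0} → R∖{0} satisfies φ(0) = ∞, 0 < φ(ℓ) < ∞ for ℓ > 0, and ∫_0^∞ φ(ℓ) dℓ = 1. Then V(t) = 0 for all t ≥ t_0 + T_s. -/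
open MeasureTheory Set

/-! The inequality says `|V'| · φ(V) ≥ 1 / T_s` while `V > 0`. As long as `V` stays positive it
is strictly decreasing, so substituting `ℓ = V(t)` turns the time spent positive, divided by `T_s`,
into at most `∫ φ(ℓ) dℓ` over the values taken, hence at most `1`. Moreover `V` never increases
after `t₀`: where `V = 0` it is at its minimum, so `V' = 0` there. Thus if `V` were still positive
after `t₀ + T_s`, it would be positive on an interval longer than `T_s`. -/

theorem mul_volume_le_lintegral_image {s : Set ℝ} (hs : MeasurableSet s) {f f' : ℝ → ℝ}
    (hf' : ∀ x ∈ s, HasDerivWithinAt f (f' x) s x) (hf : InjOn f s) (g : ℝ → ENNReal)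
    {c : ENNReal} (hc : ∀ x ∈ s, c ≤ ENNReal.ofReal |f' x| * g (f x)) :
    c * volume s ≤ ∫⁻ y in f '' s, g y := by
  rw [lintegral_image_eq_lintegral_abs_deriv_mul hs hf' hf, ← setLIntegral_const]
  exact setLIntegral_mono' hs hc

theorem ofReal_le_ofReal_abs_mul_of_le_neg_mul {a d : ℝ} {p : ENNReal} (ha : 0 ≤ a)
    (hp₀ : p ≠ 0) (hp : p ≠ ⊤) (hd : d ≤ -a * (p⁻¹).toReal) :
    ENNReal.ofReal a ≤ ENNReal.ofReal |d| * p := by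
  have hle : a * (p⁻¹).toReal ≤ |d| := by linarith [neg_abs_le d]
  calc ENNReal.ofReal a = ENNReal.ofReal (a * (p⁻¹).toReal) * p := by
        rw [ENNReal.ofReal_mul ha, ENNReal.ofReal_toReal (ENNReal.inv_ne_top.mpr hp₀), mul_assoc,
          ENNReal.inv_mul_cancel hp₀ hp, mul_one]
    _ ≤ ENNReal.ofReal |d| * p := by gcongr

theorem neg_of_le_neg_mul_toReal_inv {a d : ℝ} {p : ENNReal} (ha : 0 < a) (hp₀ : p ≠ 0)
    (hp : p ≠ ⊤) (hd : d ≤ -a * (p⁻¹).toReal) : d < 0 := by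
  have : 0 < (p⁻¹).toReal :=
    ENNReal.toReal_pos (ENNReal.inv_ne_zero.mpr hp) (ENNReal.inv_ne_top.mpr hp₀)
  nlinarith

theorem antitoneOn_of_deriv_nonpos_of_pos {f : ℝ → ℝ} {D : Set ℝ} (hD : Convex ℝ D)
    (hf : Differentiable ℝ f) (hnn : ∀ x, 0 ≤ f x)
    (hderiv : ∀ x ∈ interior D, 0 < f x → deriv f x ≤ 0) : AntitoneOn f D := by
  refine antitoneOn_of_deriv_nonpos hD hf.continuous.continuousOn hf.differentiableOn
    fun x hx => ?_
  rcases (hnn x).eq_or_lt with hx₀ | hpos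
  · have hmin : IsLocalMin f x := Filter.Eventually.of_forall fun y => hx₀ ▸ hnn y
    exact hmin.deriv_eq_zero.le
  · exact hderiv x hx hpos

theorem ofReal_sub_div_le_lintegral_of_pos {T a b : ℝ} (hT : 0 < T) (φ : ℝ → ENNReal)
    (hφ : ∀ ℓ : ℝ, 0 < ℓ → 0 < φ ℓ ∧ φ ℓ < ⊤) {V : ℝ → ℝ} (hdiff : Differentiable ℝ V)
    (hpos : ∀ u ∈ Ioo a b, 0 < V u)
    (hineq : ∀ u ∈ Ioo a b, deriv V u ≤ -(1 / T) * ((φ (V u))⁻¹).toReal) :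
    ENNReal.ofReal ((b - a) / T) ≤ ∫⁻ ℓ in Ioi 0, φ ℓ := by
  have hφV : ∀ u ∈ Ioo a b, φ (V u) ≠ 0 ∧ φ (V u) ≠ ⊤ := fun u hu =>
    ⟨(hφ _ (hpos u hu)).1.ne', (hφ _ (hpos u hu)).2.ne⟩
  have hanti : StrictAntiOn V (Ioo a b) := by
    refine strictAntiOn_of_deriv_neg (convex_Ioo a b) hdiff.continuous.continuousOn fun u hu => ?_
    rw [interior_Ioo] at hu
    exact neg_of_le_neg_mul_toReal_inv (by positivity) (hφV u hu).1 (hφV u hu).2 (hineq u hu)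
  have hmaps : V '' Ioo a b ⊆ Ioi 0 := by
    rintro _ ⟨u, hu, rfl⟩
    exact hpos u hu
  calc ENNReal.ofReal ((b - a) / T) = ENNReal.ofReal (1 / T) * volume (Ioo a b) := by
        rw [Real.volume_Ioo, ← ENNReal.ofReal_mul (by positivity), one_div_mul_eq_div]
    _ ≤ ∫⁻ ℓ in V '' Ioo a b, φ ℓ :=
        mul_volume_le_lintegral_image measurableSet_Ioo
          (fun u _ => (hdiff u).hasDerivAt.hasDerivWithinAt) hanti.injOn φ fun u hu =>
          ofReal_le_ofReal_abs_mul_of_le_neg_mul (by positivity) (hφV u hu).1 (hφV u hu).2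
            (hineq u hu)
    _ ≤ ∫⁻ ℓ in Ioi 0, φ ℓ := lintegral_mono_set hmaps

theorem predefined_time_settling_general (T_s t0 : ℝ) (hT : 0 < T_s)
    (φ : ℝ → ENNReal)
    (hφ : ∀ ℓ : ℝ, 0 < ℓ → 0 < φ ℓ ∧ φ ℓ < ⊤)
    (hint : ∫⁻ ℓ in Set.Ioi (0 : ℝ), φ ℓ = 1)
    (V : ℝ → ℝ) (hVnn : ∀ t, 0 ≤ V t)
    (hdiff : Differentiable ℝ V)
    (hineq : ∀ t, t0 ≤ t → 0 < V t → deriv V t ≤ -(1 / T_s) * ((φ (V t))⁻¹).toReal) :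
    ∀ t, t0 + T_s ≤ t → V t = 0 := by
  intro t ht
  by_contra hne
  have hVt : 0 < V t := (hVnn t).lt_of_ne' hne
  have hanti : AntitoneOn V (Ici t0) := by
    refine antitoneOn_of_deriv_nonpos_of_pos (convex_Ici t0) hdiff hVnn fun u hu hVu => ?_
    rw [interior_Ici] at hu
    exact (neg_of_le_neg_mul_toReal_inv (by positivity) (hφ _ hVu).1.ne' (hφ _ hVu).2.ne
      (hineq u hu.le hVu)).le
  obtain ⟨τ, hVτ, hτt⟩ : ∃ τ, 0 < V τ ∧ t < τ :=
    (((continuousAt_const.eventually_lt hdiff.continuous.continuousAt hVt).filter_mono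
      nhdsWithin_le_nhds).and (self_mem_nhdsWithin (s := Ioi t))).exists
  have hpos : ∀ u ∈ Ioo t0 τ, 0 < V u := fun u hu =>
    hVτ.trans_le (hanti hu.1.le (hu.1.trans hu.2).le hu.2.le)
  have hbound := ofReal_sub_div_le_lintegral_of_pos hT φ hφ hdiff hpos
    fun u hu => hineq u hu.1.le (hpos u hu)
  rw [hint, ENNReal.ofReal_le_one, div_le_one hT] at hbound
  linarith

/-- Predefined-time stability (Lemma 2 of the paper): if V̇ ≤ −(1/T_s)·ψ(V) with
ψ(ℓ) = φ(|ℓ|)⁻¹·sign(ℓ), where φ(0) = ∞, 0 < φ(ℓ) < ∞ for ℓ > 0 and ∫₀^∞ φ = 1,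
then V settles to zero within the predefined time T_s. -/
theorem predefined_time_settling (T_s t0 V0 : ℝ) (hT : 0 < T_s)
    (φ : ℝ → ENNReal) (hφ0 : φ 0 = ⊤)
    (hφ : ∀ ℓ : ℝ, 0 < ℓ → 0 < φ ℓ ∧ φ ℓ < ⊤)
    (hint : ∫⁻ ℓ in Set.Ioi (0 : ℝ), φ ℓ = 1)
    (V : ℝ → ℝ) (hVnn : ∀ t, 0 ≤ V t) (hV0 : V t0 = V0) (hV0pos : 0 < V0)
    (hdiff : Differentiable ℝ V)
    (hineq : ∀ t, t0 ≤ t → 0 < V t → deriv V t ≤ -(1 / T_s) * ((φ (V t))⁻¹).toReal) :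
    ∀ t, t0 + T_s ≤ t → V t = 0 :=
  predefined_time_settling_general T_s t0 hT φ hφ hint V hVnn hdiff hineq
end

section
/- Let M, N, m, n', k > 0 with k·m < 1 and k·n' > 1. Then the improper integral ∫_0^∞ dV / (M·V^m + N·V^{n'})^k converges and equals Γ((1−k·m)/(n'−m))·Γ((k·n'−1)/(n'−m)) / (M^k·Γ(k)·(n'−m)) · (M/N)^{(1−k·m)/(n'−m)}. -/
/-!
Factoring out `M V^m`, the integrand is `M^(-k) V^(-km) (1 + (N/M) V^p)^(-k)` with `p = n' - m`.
The substitutions `y = V^p` and `t = (N/M) y` turn the integral into the Beta integral of the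
second kind `∫₀^∞ t^(a-1) (1+t)^(-(a+b)) dt = B(a, b)` with `a = (1 - km)/p`, `b = (kn' - 1)/p`,
`a + b = k`, and `t = x⁻¹ - 1` reduces that one to Euler's integral `∫₀¹ x^(b-1) (1-x)^(a-1) dx`.
-/

open MeasureTheory Real Set

open ProbabilityTheory (beta beta_eq_betaIntegralReal)

variable {a b c p : ℝ}

lemma ofReal_rpow_mul_one_sub_rpow {x : ℝ} (hx : x ∈ Icc 0 1) :
    ((x ^ (a - 1) * (1 - x) ^ (b - 1) : ℝ) : ℂ) =
      (x : ℂ) ^ ((a : ℂ) - 1) * (1 - (x : ℂ)) ^ ((b : ℂ) - 1) := by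
  push_cast [Complex.ofReal_cpow hx.1, Complex.ofReal_cpow (sub_nonneg.2 hx.2)]
  rfl

lemma integrableOn_rpow_mul_one_sub_rpow (ha : 0 < a) (hb : 0 < b) :
    IntegrableOn (fun x : ℝ => x ^ (a - 1) * (1 - x) ^ (b - 1)) (Ioo 0 1) := by
  have h := (intervalIntegrable_iff_integrableOn_Ioc_of_le zero_le_one).1
    (Complex.betaIntegral_convergent (u := a) (v := b) (by simpa) (by simpa))
  refine (IntegrableOn.congr_fun h.re (fun x hx => ?_) measurableSet_Ioc).mono_set
    Ioo_subset_Ioc_self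
  rw [← ofReal_rpow_mul_one_sub_rpow (Ioc_subset_Icc_self hx)]
  exact Complex.ofReal_re _

lemma integral_rpow_mul_one_sub_rpow (ha : 0 < a) (hb : 0 < b) :
    ∫ x in Ioo (0 : ℝ) 1, x ^ (a - 1) * (1 - x) ^ (b - 1) = beta a b := by
  have h : ∫ x in Ioo (0 : ℝ) 1, (x : ℂ) ^ ((a : ℂ) - 1) * (1 - (x : ℂ)) ^ ((b : ℂ) - 1) =
      ↑(∫ x in Ioo (0 : ℝ) 1, x ^ (a - 1) * (1 - x) ^ (b - 1)) := by
    rw [← integral_complex_ofReal]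
    exact setIntegral_congr_fun measurableSet_Ioo fun x hx =>
      (ofReal_rpow_mul_one_sub_rpow (Ioo_subset_Icc_self hx)).symm
  rw [beta_eq_betaIntegralReal a b ha hb, Complex.betaIntegral,
    intervalIntegral.integral_of_le zero_le_one, integral_Ioc_eq_integral_Ioo, h,
    Complex.ofReal_re]

lemma hasDerivAt_inv_sub_one {x : ℝ} (hx : x ≠ 0) :
    HasDerivAt (fun y : ℝ => y⁻¹ - 1) (-(x ^ 2)⁻¹) x :=
  (hasDerivAt_inv hx).sub_const 1

lemma injOn_inv_sub_one : InjOn (fun x : ℝ => x⁻¹ - 1) (Ioo 0 1) :=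
  fun _ _ _ _ h => inv_injective (sub_left_injective h)

lemma image_inv_sub_one_Ioo : (fun x : ℝ => x⁻¹ - 1) '' Ioo 0 1 = Ioi 0 := by
  ext t
  constructor
  · rintro ⟨x, ⟨hx0, hx1⟩, rfl⟩
    simpa using one_lt_inv₀ hx0 |>.2 hx1
  · intro ht
    have ht' : 0 < 1 + t := by simp at ht; linarith
    refine ⟨(1 + t)⁻¹, ⟨inv_pos.2 ht', inv_lt_one_of_one_lt₀ (by simpa using ht)⟩, ?_⟩
    simp

lemma integrableOn_Ioi_iff_integrableOn_Ioo_inv_sub_one (g : ℝ → ℝ) :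
    IntegrableOn g (Ioi 0) ↔ IntegrableOn (fun x => (x ^ 2)⁻¹ * g (x⁻¹ - 1)) (Ioo 0 1) := by
  rw [← image_inv_sub_one_Ioo,
    integrableOn_image_iff_integrableOn_abs_deriv_smul measurableSet_Ioo
    (fun x hx => (hasDerivAt_inv_sub_one hx.1.ne').hasDerivWithinAt) injOn_inv_sub_one]
  simp

lemma integral_Ioi_eq_integral_Ioo_inv_sub_one (g : ℝ → ℝ) :
    ∫ t in Ioi 0, g t = ∫ x in Ioo 0 1, (x ^ 2)⁻¹ * g (x⁻¹ - 1) := by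
  rw [← image_inv_sub_one_Ioo, integral_image_eq_integral_abs_deriv_smul measurableSet_Ioo
    (fun x hx => (hasDerivAt_inv_sub_one hx.1.ne').hasDerivWithinAt) injOn_inv_sub_one]
  simp

lemma eqOn_inv_sq_mul_rpow_mul_one_add_rpow_neg :
    EqOn (fun x : ℝ => (x ^ 2)⁻¹ * ((x⁻¹ - 1) ^ (a - 1) * (1 + (x⁻¹ - 1)) ^ (-(a + b))))
      (fun x => x ^ (b - 1) * (1 - x) ^ (a - 1)) (Ioo 0 1) := by
  rintro x ⟨hx0, hx1⟩
  have hsub : x⁻¹ - 1 = (1 - x) * x⁻¹ := by field_simp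
  have hpow : (x ^ 2)⁻¹ * (x ^ (a - 1))⁻¹ * x ^ (a + b) = x ^ (b - 1) := by
    rw [← rpow_natCast, ← rpow_neg hx0.le, ← rpow_neg hx0.le, ← rpow_add hx0, ← rpow_add hx0]
    ring_nf
  dsimp only
  rw [add_sub_cancel, hsub, mul_rpow (by linarith) (inv_nonneg.2 hx0.le), inv_rpow hx0.le,
    inv_rpow hx0.le, rpow_neg hx0.le (a + b), inv_inv]
  linear_combination (1 - x) ^ (a - 1) * hpow

lemma integrableOn_rpow_mul_one_add_rpow_neg (ha : 0 < a) (hb : 0 < b) :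
    IntegrableOn (fun t : ℝ => t ^ (a - 1) * (1 + t) ^ (-(a + b))) (Ioi 0) := by
  rw [integrableOn_Ioi_iff_integrableOn_Ioo_inv_sub_one]
  exact (integrableOn_rpow_mul_one_sub_rpow hb ha).congr_fun
    eqOn_inv_sq_mul_rpow_mul_one_add_rpow_neg.symm measurableSet_Ioo

lemma integral_rpow_mul_one_add_rpow_neg (ha : 0 < a) (hb : 0 < b) :
    ∫ t in Ioi (0 : ℝ), t ^ (a - 1) * (1 + t) ^ (-(a + b)) = beta a b := by
  rw [integral_Ioi_eq_integral_Ioo_inv_sub_one,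
    setIntegral_congr_fun measurableSet_Ioo eqOn_inv_sq_mul_rpow_mul_one_add_rpow_neg,
    integral_rpow_mul_one_sub_rpow hb ha, beta, beta, mul_comm, add_comm]

lemma eqOn_rpow_mul_one_add_mul_rpow_neg (hc : 0 < c) :
    EqOn (fun t : ℝ => t ^ (a - 1) * (1 + c * t) ^ (-(a + b)))
      (fun t => c ^ (1 - a) * ((c * t) ^ (a - 1) * (1 + c * t) ^ (-(a + b)))) (Ioi 0) := by
  intro t ht
  have hc1 : c ^ (1 - a) * c ^ (a - 1) = 1 := by rw [← rpow_add hc]; simp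
  dsimp only
  rw [mul_rpow hc.le (le_of_lt ht)]
  linear_combination (-(t ^ (a - 1) * (1 + c * t) ^ (-(a + b)))) * hc1

lemma integrableOn_rpow_mul_one_add_mul_rpow_neg (hc : 0 < c) (ha : 0 < a) (hb : 0 < b) :
    IntegrableOn (fun t : ℝ => t ^ (a - 1) * (1 + c * t) ^ (-(a + b))) (Ioi 0) := by
  have h := (integrableOn_Ioi_comp_mul_left_iff (fun u => u ^ (a - 1) * (1 + u) ^ (-(a + b))) 0
    hc).2 (by simpa using integrableOn_rpow_mul_one_add_rpow_neg ha hb)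
  exact IntegrableOn.congr_fun (h.const_mul _) (eqOn_rpow_mul_one_add_mul_rpow_neg hc).symm
    measurableSet_Ioi

lemma integral_rpow_mul_one_add_mul_rpow_neg (hc : 0 < c) (ha : 0 < a) (hb : 0 < b) :
    ∫ t in Ioi (0 : ℝ), t ^ (a - 1) * (1 + c * t) ^ (-(a + b)) = beta a b / c ^ a := by
  rw [setIntegral_congr_fun measurableSet_Ioi (eqOn_rpow_mul_one_add_mul_rpow_neg hc),
    integral_const_mul,
    integral_comp_mul_left_Ioi (fun u => u ^ (a - 1) * (1 + u) ^ (-(a + b))) 0 hc,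
    mul_zero, integral_rpow_mul_one_add_rpow_neg ha hb, smul_eq_mul, rpow_sub hc, rpow_one]
  field_simp

lemma eqOn_rpow_mul_one_add_mul_rpow_rpow_neg (hp : 0 < p) :
    EqOn (fun x : ℝ => x ^ (p * a - 1) * (1 + c * x ^ p) ^ (-(a + b)))
      (fun x => p⁻¹ * ((p * x ^ (p - 1)) • ((x ^ p) ^ (a - 1) * (1 + c * x ^ p) ^ (-(a + b)))))
      (Ioi 0) := by
  intro x hx
  have hx' : x ^ (p * a - 1) = x ^ (p - 1) * (x ^ p) ^ (a - 1) := by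
    rw [← rpow_mul (le_of_lt hx), ← rpow_add hx]
    ring_nf
  simp only [smul_eq_mul]
  rw [hx']
  field_simp

lemma integrableOn_rpow_mul_one_add_mul_rpow_rpow_neg (hp : 0 < p) (hc : 0 < c) (ha : 0 < a)
    (hb : 0 < b) :
    IntegrableOn (fun x : ℝ => x ^ (p * a - 1) * (1 + c * x ^ p) ^ (-(a + b))) (Ioi 0) := by
  have h := (integrableOn_Ioi_comp_rpow_iff (fun y => y ^ (a - 1) * (1 + c * y) ^ (-(a + b)))
    hp.ne').2 (integrableOn_rpow_mul_one_add_mul_rpow_neg hc ha hb)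
  rw [abs_of_pos hp] at h
  exact IntegrableOn.congr_fun (h.const_mul _) (eqOn_rpow_mul_one_add_mul_rpow_rpow_neg hp).symm
    measurableSet_Ioi

lemma integral_rpow_mul_one_add_mul_rpow_rpow_neg (hp : 0 < p) (hc : 0 < c) (ha : 0 < a)
    (hb : 0 < b) :
    ∫ x in Ioi (0 : ℝ), x ^ (p * a - 1) * (1 + c * x ^ p) ^ (-(a + b)) =
      beta a b / (p * c ^ a) := by
  rw [setIntegral_congr_fun measurableSet_Ioi (eqOn_rpow_mul_one_add_mul_rpow_rpow_neg hp),
    integral_const_mul,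
    integral_comp_rpow_Ioi_of_pos (g := fun y => y ^ (a - 1) * (1 + c * y) ^ (-(a + b))) hp,
    integral_rpow_mul_one_add_mul_rpow_neg hc ha hb]
  field_simp

lemma mul_rpow_add_mul_rpow_rpow_neg {M N m n k V : ℝ} (hM : 0 < M) (hN : 0 ≤ N) (hV : 0 < V) :
    (M * V ^ m + N * V ^ n) ^ (-k) =
      M ^ (-k) * (V ^ (-(k * m)) * (1 + N / M * V ^ (n - m)) ^ (-k)) := by
  have h : M * V ^ m + N * V ^ n = M * V ^ m * (1 + N / M * V ^ (n - m)) := by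
    rw [rpow_sub hV]
    field_simp
  rw [h, mul_rpow (by positivity) (by positivity), mul_rpow hM.le (by positivity),
    ← rpow_mul hV.le, mul_neg, mul_comm m k, mul_assoc]

theorem settling_time_integral_general (M N m n' k : ℝ) (hM : 0 < M) (hN : 0 < N)
    (hk : 0 < k) (hkm : k * m < 1) (hkn : 1 < k * n') :
    IntegrableOn (fun V : ℝ => (M * V ^ m + N * V ^ n') ^ (-k)) (Set.Ioi 0) ∧
    (∫ V in Set.Ioi (0 : ℝ), (M * V ^ m + N * V ^ n') ^ (-k)) =
      Real.Gamma ((1 - k * m) / (n' - m)) * Real.Gamma ((k * n' - 1) / (n' - m)) /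
          (M ^ k * Real.Gamma k * (n' - m)) * (M / N) ^ ((1 - k * m) / (n' - m)) := by
  have hp : 0 < n' - m := sub_pos.2 ((mul_lt_mul_iff_right₀ hk).1 (hkm.trans hkn))
  set a := (1 - k * m) / (n' - m)
  set b := (k * n' - 1) / (n' - m)
  have ha : 0 < a := div_pos (by linarith) hp
  have hb : 0 < b := div_pos (by linarith) hp
  have hpa : (n' - m) * a - 1 = -(k * m) := by simp only [a]; field_simp; ring
  have hab : a + b = k := by simp only [a, b]; field_simp; ring
  have hF : EqOn (fun V : ℝ => (M * V ^ m + N * V ^ n') ^ (-k))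
      (fun V => M ^ (-k) * (V ^ ((n' - m) * a - 1) * (1 + N / M * V ^ (n' - m)) ^ (-(a + b))))
      (Ioi 0) :=
    fun V hV => by rw [hpa, hab]; exact mul_rpow_add_mul_rpow_rpow_neg hM hN.le hV
  have hc : 0 < N / M := div_pos hN hM
  refine ⟨IntegrableOn.congr_fun
    ((integrableOn_rpow_mul_one_add_mul_rpow_rpow_neg hp hc ha hb).const_mul _) hF.symm
    measurableSet_Ioi, ?_⟩
  rw [setIntegral_congr_fun measurableSet_Ioi hF, integral_const_mul,
    integral_rpow_mul_one_add_mul_rpow_rpow_neg hp hc ha hb, beta, hab, rpow_neg hM.le,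
    div_rpow hN.le hM.le, div_rpow hM.le hN.le]
  field_simp

/-- The settling-time integral: ∫₀^∞ dV/(M V^m + N V^{n'})^k converges and equals the
stated Gamma-function expression. -/
theorem settling_time_integral (M N m n' k : ℝ) (hM : 0 < M) (hN : 0 < N) (hm : 0 < m)
    (hn' : 0 < n') (hk : 0 < k) (hkm : k * m < 1) (hkn : 1 < k * n') :
    IntegrableOn (fun V : ℝ => (M * V ^ m + N * V ^ n') ^ (-k)) (Set.Ioi 0) ∧
    (∫ V in Set.Ioi (0 : ℝ), (M * V ^ m + N * V ^ n') ^ (-k)) =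
      Real.Gamma ((1 - k * m) / (n' - m)) * Real.Gamma ((k * n' - 1) / (n' - m)) /
          (M ^ k * Real.Gamma k * (n' - m)) * (M / N) ^ ((1 - k * m) / (n' - m)) :=
  settling_time_integral_general M N m n' k hM hN hk hkm hkn
end

section
/- Let ξ : [t_0, ∞) → R^n be differentiable, and define V_2(t) = max_i ξ_i(t) − min_i ξ_i(t). Suppose at every time t, whenever ξ_i(t) = max_j ξ_j(t) we have the (Dini) derivative of ξ_i nonpositive, and whenever ξ_i(t) = min_j ξ_j(t) we have the derivative of ξ_i nonnegative. Then V_2 is nonincreasing, i.e., V_2(t) ≤ V_2(s) for all t ≥ s ≥ t_0. -/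
open Set Filter Topology

/-- Auxiliary: the max is nonincreasing if the derivative is ≤ 0 at every maximizing index. -/
lemma sup_nonincreasing_aux (n : ℕ) (hne : (Finset.univ : Finset (Fin n)).Nonempty)
    (t0 : ℝ) (ξ : ℝ → Fin n → ℝ)
    (hdiff : ∀ i, Differentiable ℝ (fun t => ξ t i))
    (hmax : ∀ t, t0 ≤ t → ∀ i, (∀ j, ξ t j ≤ ξ t i) → deriv (fun s => ξ s i) t ≤ 0) :
    ∀ s t, t0 ≤ s → s ≤ t →
      Finset.univ.sup' hne (ξ t) ≤ Finset.univ.sup' hne (ξ s) := by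
  intro s t hs hst
  set M : ℝ → ℝ := fun u => Finset.univ.sup' hne (ξ u) with hM
  have hMcont : Continuous M := by
    apply Continuous.finset_sup'_apply hne
    intro i _
    exact (hdiff i).continuous
  have key : ∀ ⦃x⦄, x ∈ Icc s t → M x ≤ M s := by
    apply image_le_of_liminf_slope_right_le_deriv_boundary
      (B := fun _ => M s) (B' := fun _ => 0)
      (hMcont.continuousOn) le_rfl continuousOn_const
      (fun x _ => hasDerivWithinAt_const x _ (M s))
    intro x hx r hr
    apply Filter.Eventually.frequently
    classical
    -- the set of maximizing indices at x
    set A : Finset (Fin n) := Finset.univ.filter (fun i => ∀ j, ξ x j ≤ ξ x i) with hAdef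
    obtain ⟨i0, _, hi0⟩ := Finset.exists_mem_eq_sup' hne (ξ x)
    have hi0max : ∀ j, ξ x j ≤ ξ x i0 := fun j => hi0 ▸ Finset.le_sup' (ξ x) (Finset.mem_univ j)
    have hi0A : i0 ∈ A := by simp [hAdef, hi0max]
    have hA : A.Nonempty := ⟨i0, hi0A⟩
    have hAmax : ∀ i ∈ A, ∀ j, ξ x j ≤ ξ x i := by
      intro i hi
      simpa [hAdef] using hi
    have hAeq : ∀ i ∈ A, ξ x i = M x := by
      intro i hi
      refine le_antisymm (Finset.le_sup' (ξ x) (Finset.mem_univ i)) ?_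
      exact Finset.sup'_le hne _ (fun j _ => hAmax i hi j)
    -- (1) slopes of maximizing coordinates are eventually < r
    have E1 : ∀ᶠ z in 𝓝[>] x, ∀ i ∈ A, slope (fun u => ξ u i) x z < r := by
      rw [Filter.eventually_all_finset]
      intro i hi
      have hd : deriv (fun u => ξ u i) x ≤ 0 := hmax x (hs.trans hx.1) i (hAmax i hi)
      have htend : Tendsto (slope (fun u => ξ u i) x) (𝓝[≠] x) (𝓝 (deriv (fun u => ξ u i) x)) :=
        hasDerivAt_iff_tendsto_slope.1 ((hdiff i).differentiableAt.hasDerivAt)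
      have : ∀ᶠ z in 𝓝[≠] x, slope (fun u => ξ u i) x z < r :=
        htend (Iio_mem_nhds (lt_of_le_of_lt hd hr))
      exact this.filter_mono (nhdsWithin_mono x (fun z hz => ne_of_gt hz))
    -- (2) eventually every coordinate is dominated by some maximizing coordinate
    have E2 : ∀ᶠ z in 𝓝[>] x, ∀ j, ξ z j ≤ A.sup' hA (ξ z) := by
      rw [eventually_all]
      intro j
      by_cases hjA : j ∈ A
      · exact Filter.Eventually.of_forall fun z => Finset.le_sup' (ξ z) hjA
      · have hjlt : ξ x j < ξ x i0 := by
          rcases lt_or_eq_of_le (hi0max j) with h | h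
          · exact h
          · exact absurd (by simp [hAdef, h ▸ hi0max]) hjA
        have hcont : Continuous (fun z => ξ z i0 - ξ z j) :=
          ((hdiff i0).continuous).sub ((hdiff j).continuous)
        have : ∀ᶠ z in 𝓝 x, 0 < ξ z i0 - ξ z j := by
          have := hcont.continuousAt (x := x)
          exact this.eventually_mem (Ioi_mem_nhds (by linarith : (0:ℝ) < ξ x i0 - ξ x j))
        have : ∀ᶠ z in 𝓝[>] x, 0 < ξ z i0 - ξ z j := this.filter_mono nhdsWithin_le_nhds
        exact this.mono fun z hz =>
          le_trans (by linarith) (Finset.le_sup' (ξ z) hi0A)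
    filter_upwards [E1, E2, self_mem_nhdsWithin] with z h1 h2 (hz : x < z)
    -- pick the maximizing coordinate at z among A
    obtain ⟨i, hiA, hieq⟩ := Finset.exists_mem_eq_sup' hA (ξ z)
    have hMz : M z ≤ ξ z i := by
      rw [← hieq]
      exact Finset.sup'_le hne _ (fun j _ => h2 j)
    have hslope : slope M x z ≤ slope (fun u => ξ u i) x z := by
      rw [slope_def_field, slope_def_field]
      apply div_le_div_of_nonneg_right _ (sub_pos.2 hz).le |>.trans_eq rfl
      · have := hAeq i hiA
        linarith
    exact lt_of_le_of_lt hslope (h1 i hiA)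
  exact key ⟨hst, le_rfl⟩

lemma neg_sup'_neg (n : ℕ) (hne : (Finset.univ : Finset (Fin n)).Nonempty) (f : Fin n → ℝ) :
    -(Finset.univ.sup' hne (fun i => -f i)) = Finset.univ.inf' hne f := by
  apply le_antisymm
  · apply Finset.le_inf'
    intro i hi
    rw [neg_le]
    exact Finset.le_sup' (fun i => -f i) hi
  · rw [le_neg]
    apply Finset.sup'_le
    intro i hi
    rw [neg_le, neg_neg]
    exact Finset.inf'_le f hi

/-- The spread V₂ = max_i ξ_i − min_i ξ_i is nonincreasing if the derivative is ≤ 0 at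
every maximizing index and ≥ 0 at every minimizing index. -/
theorem spread_nonincreasing (n : ℕ) (hne : (Finset.univ : Finset (Fin n)).Nonempty)
    (t0 : ℝ) (ξ : ℝ → Fin n → ℝ)
    (hdiff : ∀ i, Differentiable ℝ (fun t => ξ t i))
    (hmax : ∀ t, t0 ≤ t → ∀ i, (∀ j, ξ t j ≤ ξ t i) → deriv (fun s => ξ s i) t ≤ 0)
    (hmin : ∀ t, t0 ≤ t → ∀ i, (∀ j, ξ t i ≤ ξ t j) → 0 ≤ deriv (fun s => ξ s i) t) :
    ∀ s t, t0 ≤ s → s ≤ t →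
      Finset.univ.sup' hne (ξ t) - Finset.univ.inf' hne (ξ t) ≤
        Finset.univ.sup' hne (ξ s) - Finset.univ.inf' hne (ξ s) := by
  intro s t hs hst
  have hsup := sup_nonincreasing_aux n hne t0 ξ hdiff hmax s t hs hst
  have hinf : Finset.univ.inf' hne (ξ s) ≤ Finset.univ.inf' hne (ξ t) := by
    have hsup' := sup_nonincreasing_aux n hne t0 (fun u i => -ξ u i)
      (fun i => (hdiff i).neg)
      (fun u hu i hi => by
        have h0 : 0 ≤ deriv (fun v => ξ v i) u := hmin u hu i (fun j => neg_le_neg_iff.1 (hi j))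
        have : deriv (fun v => -ξ v i) u = -deriv (fun v => ξ v i) u := deriv.neg
        rw [this]; linarith)
      s t hs hst
    have h1 := neg_sup'_neg n hne (ξ s)
    have h2 := neg_sup'_neg n hne (ξ t)
    rw [← h1, ← h2]
    simpa using hsup'
  linarith
end

section
/- Let ζ ∈ R^E with E ≥ 1, let P, μ > 0, and let M, N, m, n', k > 0 with k·m < 1, k·n' > 1. Then Σ_{i=1}^E P·|ζ_i|·(M|ζ_i|^m + N|ζ_i|^{n'})^k ≥ E·P·s̄·(M·s̄^m + N·s̄^{n'})^k, where s̄ = (1/E)·Σ_{i=1}^E |ζ_i|. -/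
/-!
With `g x = M * x ^ m + N * x ^ n`, `A = M * x ^ m` and `B = N * x ^ n`, the second derivative
of `x ↦ x * g x ^ k` at `x > 0` is `k * g x ^ (k - 2) / x` times the quadratic form
`m (k m + 1) A² + ((m - n)² + 2 k m n + m + n) A B + n (k n + 1) B²`, whose coefficients are
nonnegative. So this map is convex on `[0, ∞)`, and Jensen's inequality for it with uniform
weights at the points `|ζ i|` is the claim.
-/

open Set Real Finset

theorem ConvexOn.card_mul_map_mean_le {ι : Type*} {s : Set ℝ} {f : ℝ → ℝ}
    (hf : ConvexOn ℝ s f) (t : Finset ι) (x : ι → ℝ) (hx : ∀ i ∈ t, x i ∈ s) :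
    (#t : ℝ) * f ((1 / #t) * ∑ i ∈ t, x i) ≤ ∑ i ∈ t, f (x i) := by
  rcases t.eq_empty_or_nonempty with rfl | ht
  · simp
  have hcard : (0 : ℝ) < #t := by exact_mod_cast ht.card_pos
  have hjensen := hf.map_sum_le (w := fun _ ↦ 1 / (#t : ℝ)) (fun _ _ ↦ by positivity)
    (by simp [hcard.ne']) hx
  simp only [smul_eq_mul, ← Finset.mul_sum] at hjensen
  calc (#t : ℝ) * f ((1 / #t) * ∑ i ∈ t, x i)
      ≤ #t * ((1 / #t) * ∑ i ∈ t, f (x i)) := by gcongr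
    _ = ∑ i ∈ t, f (x i) := by field_simp

theorem two_mul_add_mul_add_sq_add_mul_nonneg {A B m n k : ℝ} (hA : 0 ≤ A) (hB : 0 ≤ B)
    (hm : 0 ≤ m) (hn : 0 ≤ n) (hk : 0 ≤ k) :
    0 ≤ 2 * (A + B) * (m * A + n * B) + (k - 1) * (m * A + n * B) ^ 2
      + (A + B) * (m * (m - 1) * A + n * (n - 1) * B) := by
  have hform : 2 * (A + B) * (m * A + n * B) + (k - 1) * (m * A + n * B) ^ 2
      + (A + B) * (m * (m - 1) * A + n * (n - 1) * B)
      = m * (k * m + 1) * A ^ 2 + ((m - n) ^ 2 + 2 * k * m * n + m + n) * (A * B)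
        + n * (k * n + 1) * B ^ 2 := by ring
  rw [hform]
  positivity

theorem convexOn_mul_rpow_of_hasDerivAt {g g' g'' : ℝ → ℝ} {k : ℝ} (hk : 0 ≤ k)
    (hg : ContinuousOn g (Ici 0)) (hg_pos : ∀ x, 0 < x → 0 < g x)
    (hg' : ∀ x, 0 < x → HasDerivAt g (g' x) x) (hg'' : ∀ x, 0 < x → HasDerivAt g' (g'' x) x)
    (h : ∀ x, 0 < x → 0 ≤ 2 * g x * g' x + (k - 1) * x * g' x ^ 2 + x * g x * g'' x) :
    ConvexOn ℝ (Ici 0) (fun x ↦ x * g x ^ k) := by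
  refine convexOn_of_hasDerivWithinAt2_nonneg (convex_Ici 0)
    (f' := fun x ↦ g x ^ k + x * (k * g x ^ (k - 1) * g' x))
    (f'' := fun x ↦ 2 * (k * g x ^ (k - 1) * g' x)
      + x * (k * ((k - 1) * g x ^ (k - 1 - 1) * g' x ^ 2) + k * g x ^ (k - 1) * g'' x))
    (continuousOn_id.mul (hg.rpow_const fun _ _ ↦ Or.inr hk)) ?_ ?_ ?_ <;>
    simp only [interior_Ici, Set.mem_Ioi] <;> intro x hx <;>
    have hpow (p : ℝ) := (hg' x hx).rpow_const (p := p) (Or.inl (hg_pos x hx).ne')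
  · have hderiv := (hasDerivAt_id x).mul (hpow k)
    exact (hderiv.congr_deriv (by simp only [id_eq]; ring)).hasDerivWithinAt
  · have hderiv :=
      (hpow k).add ((hasDerivAt_id x).mul ((hpow (k - 1)).const_mul k |>.mul (hg'' x hx)))
    exact (hderiv.congr_deriv (by simp only [id_eq, Pi.mul_apply]; ring)).hasDerivWithinAt
  · have hgx := hg_pos x hx
    have hsplit : g x ^ (k - 1) = g x ^ (k - 1 - 1) * g x := by
      rw [rpow_sub_one hgx.ne' (k - 1)]; field_simp
    have hfac : 2 * (k * g x ^ (k - 1) * g' x)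
        + x * (k * ((k - 1) * g x ^ (k - 1 - 1) * g' x ^ 2) + k * g x ^ (k - 1) * g'' x)
        = k * g x ^ (k - 1 - 1)
          * (2 * g x * g' x + (k - 1) * x * g' x ^ 2 + x * g x * g'' x) := by
      rw [hsplit]; ring
    rw [hfac]
    exact mul_nonneg (mul_nonneg hk (rpow_pos_of_pos hgx _).le) (h x hx)

theorem convexOn_mul_rpow_add_rpow {M N m n k : ℝ} (hM : 0 < M) (hN : 0 < N)
    (hm : 0 ≤ m) (hn : 0 ≤ n) (hk : 0 ≤ k) :
    ConvexOn ℝ (Ici 0) (fun x ↦ x * (M * x ^ m + N * x ^ n) ^ k) := by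
  refine convexOn_mul_rpow_of_hasDerivAt hk
    (g' := fun x ↦ M * (m * x ^ (m - 1)) + N * (n * x ^ (n - 1)))
    (g'' := fun x ↦ M * (m * ((m - 1) * x ^ (m - 1 - 1))) + N * (n * ((n - 1) * x ^ (n - 1 - 1))))
    ((continuousOn_const.mul (continuousOn_id.rpow_const fun _ _ ↦ Or.inr hm)).add
      (continuousOn_const.mul (continuousOn_id.rpow_const fun _ _ ↦ Or.inr hn)))
    (fun x hx ↦ by positivity) (fun x hx ↦ ?_) (fun x hx ↦ ?_) (fun x hx ↦ ?_)
  · exact ((hasDerivAt_rpow_const (Or.inl hx.ne')).const_mul M).add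
      ((hasDerivAt_rpow_const (Or.inl hx.ne')).const_mul N)
  · exact (((hasDerivAt_rpow_const (Or.inl hx.ne')).const_mul m).const_mul M).add
      (((hasDerivAt_rpow_const (Or.inl hx.ne')).const_mul n).const_mul N)
  · simp only [rpow_sub_one hx.ne']
    have hquad := two_mul_add_mul_add_sq_add_mul_nonneg (k := k)
      (mul_pos hM (rpow_pos_of_pos hx m)).le (mul_pos hN (rpow_pos_of_pos hx n)).le hm hn hk
    refine (mul_nonneg (one_div_nonneg.mpr hx.le) hquad).trans_eq ?_
    field_simp

theorem jensen_applied_abs_general (E : ℕ) (ζ : Fin E → ℝ)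
    (P : ℝ) (hP : 0 < P)
    (M N m n' k : ℝ) (hM : 0 < M) (hN : 0 < N) (hm : 0 < m) (hn' : 0 < n') (hk : 0 < k) :
    (E : ℝ) * P * ((1 / (E : ℝ)) * ∑ i, |ζ i|) *
        (M * ((1 / (E : ℝ)) * ∑ i, |ζ i|) ^ m + N * ((1 / (E : ℝ)) * ∑ i, |ζ i|) ^ n') ^ k
      ≤ ∑ i, P * |ζ i| * (M * |ζ i| ^ m + N * |ζ i| ^ n') ^ k := by
  have hjensen := (convexOn_mul_rpow_add_rpow hM hN hm.le hn'.le hk.le).card_mul_map_mean_le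
    univ (fun i ↦ |ζ i|) fun i _ ↦ abs_nonneg (ζ i)
  simp only [card_univ, Fintype.card_fin] at hjensen
  calc _ = P * ((E : ℝ) * (((1 / (E : ℝ)) * ∑ i, |ζ i|) *
        (M * ((1 / (E : ℝ)) * ∑ i, |ζ i|) ^ m + N * ((1 / (E : ℝ)) * ∑ i, |ζ i|) ^ n') ^ k)) := by
        ring
    _ ≤ P * ∑ i, |ζ i| * (M * |ζ i| ^ m + N * |ζ i| ^ n') ^ k := by gcongr
    _ = _ := by rw [mul_sum]; simp only [mul_assoc]

/-- Application of the Jensen-type inequality to s_i = |ζ_i|: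
Σ_i P·|ζ_i|·(M|ζ_i|^m + N|ζ_i|^{n'})^k ≥ E·P·s̄·(M s̄^m + N s̄^{n'})^k with
s̄ the mean of the |ζ_i|. -/
theorem jensen_applied_abs (E : ℕ) (hE : 1 ≤ E) (ζ : Fin E → ℝ)
    (P μ : ℝ) (hP : 0 < P) (hμ : 0 < μ)
    (M N m n' k : ℝ) (hM : 0 < M) (hN : 0 < N) (hm : 0 < m) (hn' : 0 < n') (hk : 0 < k)
    (hkm : k * m < 1) (hkn : 1 < k * n') :
    (E : ℝ) * P * ((1 / (E : ℝ)) * ∑ i, |ζ i|) *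
        (M * ((1 / (E : ℝ)) * ∑ i, |ζ i|) ^ m + N * ((1 / (E : ℝ)) * ∑ i, |ζ i|) ^ n') ^ k
      ≤ ∑ i, P * |ζ i| * (M * |ζ i| ^ m + N * |ζ i| ^ n') ^ k :=
  jensen_applied_abs_general E ζ P hP M N m n' k hM hN hm hn' hk
end

section
/- Suppose V : [0,∞) → R_{≥0} is differentiable where positive, V(0) > 0, and V'(t) ≤ −a·V(t)^{p} − b·V(t)^{q} whenever V(t) > 0, with a, b > 0, 0 < p < 1 < q. Then V reaches zero in finite time, and the settling time is bounded by T ≤ 1/(a(1−p)) + 1/(b(q−1)), a bound independent of V(0). -/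
open Real Set

/-- Fixed-time stability comparison lemma: if V̇ ≤ −a V^p − b V^q with a,b > 0 and
0 < p < 1 < q, then V reaches zero within T ≤ 1/(a(1−p)) + 1/(b(q−1)), independently
of V(0). -/
theorem fixed_time_settling (a b p q : ℝ) (ha : 0 < a) (hb : 0 < b)
    (hp0 : 0 < p) (hp1 : p < 1) (hq : 1 < q)
    (V : ℝ → ℝ) (hVnn : ∀ t, 0 ≤ V t) (hV0 : 0 < V 0) (hdiff : Differentiable ℝ V)
    (hineq : ∀ t, 0 ≤ t → 0 < V t → deriv V t ≤ -a * V t ^ p - b * V t ^ q) :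
    ∀ t, 1 / (a * (1 - p)) + 1 / (b * (q - 1)) ≤ t → V t = 0 := by
  have h1p : 0 < 1 - p := by linarith
  have hq1 : 0 < q - 1 := by linarith
  set T2 : ℝ := 1 / (a * (1 - p)) with hT2def
  set T1 : ℝ := 1 / (b * (q - 1)) with hT1def
  have hT2pos : 0 < T2 := by positivity
  have hT1pos : 0 < T1 := by positivity
  -- Lemma B : once V is zero it stays zero
  have hB : ∀ s t : ℝ, 0 ≤ s → s ≤ t → V s = 0 → V t = 0 := by
    intro s t hs hst hVs
    by_contra hne
    have hVt : 0 < V t := lt_of_le_of_ne (hVnn t) (Ne.symm hne)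
    set Z : Set ℝ := {r ∈ Icc s t | V r = 0} with hZdef
    have hZne : Z.Nonempty := ⟨s, ⟨le_refl s, hst⟩, hVs⟩
    have hZbdd : BddAbove Z := ⟨t, fun r hr => hr.1.2⟩
    have hZclosed : IsClosed Z := by
      have : Z = Icc s t ∩ V ⁻¹' {0} := by
        ext r
        simp only [hZdef, Set.mem_setOf_eq, Set.mem_inter_iff, Set.mem_preimage,
          Set.mem_singleton_iff]
      rw [this]
      exact isClosed_Icc.inter (isClosed_singleton.preimage hdiff.continuous)
    have huZ : sSup Z ∈ Z := hZclosed.csSup_mem hZne hZbdd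
    set u : ℝ := sSup Z with hudef
    have hus : s ≤ u := huZ.1.1
    have hut : u ≤ t := huZ.1.2
    have hVu : V u = 0 := huZ.2
    have hult : u < t := hut.lt_of_ne fun h => hVt.ne' (h ▸ hVu)
    -- V is positive on (u, t]
    have hposint : ∀ r, u < r → r ≤ t → 0 < V r := by
      intro r hur hrt
      rcases lt_or_eq_of_le (hVnn r) with h | h
      · exact h
      · exfalso
        have : r ∈ Z := ⟨⟨le_trans hus hur.le, hrt⟩, h.symm⟩
        exact absurd (le_csSup hZbdd this) (not_le.mpr hur)
    have key := (convex_Icc u t).image_sub_le_mul_sub_of_deriv_le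
      (hdiff.continuous.continuousOn) (hdiff.differentiableOn) (C := 0)
      (fun x hx => by
        rw [interior_Icc] at hx
        have hxpos : 0 < V x := hposint x hx.1 hx.2.le
        have hx0 : 0 ≤ x := le_trans (le_trans hs hus) hx.1.le
        have h1 : 0 < V x ^ p := rpow_pos_of_pos hxpos p
        have h2 : 0 < V x ^ q := rpow_pos_of_pos hxpos q
        have := hineq x hx0 hxpos
        nlinarith)
      u (left_mem_Icc.mpr hut) t (right_mem_Icc.mpr hut) hut
    rw [hVu] at key
    linarith
  -- Lemma A : V reaches zero on [0, T2 + T1]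
  have hA : ∃ r ∈ Icc (0:ℝ) (T2 + T1), V r = 0 := by
    by_contra hno
    push_neg at hno
    have hpos : ∀ r ∈ Icc (0:ℝ) (T2 + T1), 0 < V r := fun r hr =>
      lt_of_le_of_ne (hVnn r) (Ne.symm (hno r hr))
    -- Phase 1 : there is s ∈ [0, T1] with V s ≤ 1
    have hphase1 : ∃ s ∈ Icc (0:ℝ) T1, V s ≤ 1 := by
      by_contra hno1
      push_neg at hno1
      have hgt1 : ∀ r ∈ Icc (0:ℝ) T1, 1 < V r := fun r hr => hno1 r hr
      set U : ℝ → ℝ := fun t => V t ^ (1 - q) with hUdef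
      have hUderiv : ∀ x ∈ Icc (0:ℝ) T1, HasDerivAt U ((1 - q) * V x ^ (1 - q - 1) * deriv V x) x := by
        intro x hx
        have h := ((hdiff x).hasDerivAt).rpow_const (p := 1 - q)
          (Or.inl (by have := hgt1 x hx; intro h0; rw [h0] at this; linarith))
        have he : deriv V x * (1 - q) * V x ^ (1 - q - 1)
            = (1 - q) * V x ^ (1 - q - 1) * deriv V x := by ring
        exact he ▸ h
      have hUcont : ContinuousOn U (Icc 0 T1) :=
        fun x hx => ((hUderiv x hx).differentiableAt.continuousAt).continuousWithinAt
      have hUdiff : DifferentiableOn ℝ U (interior (Icc 0 T1)) := by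
        rw [interior_Icc]
        exact fun x hx => ((hUderiv x (Ioo_subset_Icc_self hx)).differentiableAt).differentiableWithinAt
      have key := (convex_Icc (0:ℝ) T1).mul_sub_le_image_sub_of_le_deriv hUcont hUdiff
        (C := (q - 1) * b)
        (fun x hx => by
          rw [interior_Icc] at hx
          have hxI : x ∈ Icc (0:ℝ) T1 := Ioo_subset_Icc_self hx
          have hx1 : 1 < V x := hgt1 x hxI
          have hxpos : 0 < V x := by linarith
          rw [(hUderiv x hxI).deriv]
          have hA : 0 < V x ^ (1 - q - 1) := rpow_pos_of_pos hxpos _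
          have hBpos : 0 < V x ^ q := rpow_pos_of_pos hxpos q
          have hAB : V x ^ (1 - q - 1) * V x ^ q = V x ^ (1 - q - 1 + q) := by
            rw [← Real.rpow_add hxpos]
          have hexp : (1:ℝ) - q - 1 + q = 0 := by ring
          rw [hexp, Real.rpow_zero] at hAB
          have hp1pos : 0 < V x ^ p := rpow_pos_of_pos hxpos p
          have hv' : deriv V x ≤ -b * V x ^ q := by
            have := hineq x hxI.1 hxpos
            nlinarith
          -- multiply by nonpositive (1-q) * V x ^ (1-q-1)
          have hfac : (1 - q) * V x ^ (1 - q - 1) ≤ 0 := by nlinarith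
          have := mul_le_mul_of_nonpos_left hv' hfac
          calc (q - 1) * b = (1 - q) * V x ^ (1 - q - 1) * (-b * V x ^ q) := by
                linear_combination (-(q - 1) * b) * hAB
            _ ≤ (1 - q) * V x ^ (1 - q - 1) * deriv V x := this)
        0 (left_mem_Icc.mpr hT1pos.le) T1 (right_mem_Icc.mpr hT1pos.le) hT1pos.le
      have hCT1 : (q - 1) * b * (T1 - 0) = 1 := by
        rw [hT1def]; field_simp; ring
      rw [hCT1] at key
      have hU0 : 0 < U 0 := rpow_pos_of_pos (by linarith [hgt1 0 (left_mem_Icc.mpr hT1pos.le)]) _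
      have hUT1 : U T1 < 1 :=
        rpow_lt_one_of_one_lt_of_neg (hgt1 T1 (right_mem_Icc.mpr hT1pos.le)) (by linarith)
      linarith
    -- Phase 2 : from s, V reaches 0 within time T2, contradiction
    obtain ⟨s, hsI, hVs1⟩ := hphase1
    have hsub : Icc s (s + T2) ⊆ Icc 0 (T2 + T1) := by
      intro x hx
      exact ⟨le_trans hsI.1 hx.1, by linarith [hx.2, hsI.2]⟩
    set W : ℝ → ℝ := fun t => V t ^ (1 - p) with hWdef
    have hWderiv : ∀ x ∈ Icc s (s + T2), HasDerivAt W ((1 - p) * V x ^ (1 - p - 1) * deriv V x) x := by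
      intro x hx
      have h := ((hdiff x).hasDerivAt).rpow_const (p := 1 - p) (Or.inl (hpos x (hsub hx)).ne')
      have he : deriv V x * (1 - p) * V x ^ (1 - p - 1)
          = (1 - p) * V x ^ (1 - p - 1) * deriv V x := by ring
      exact he ▸ h
    have hWcont : ContinuousOn W (Icc s (s + T2)) :=
      fun x hx => ((hWderiv x hx).differentiableAt.continuousAt).continuousWithinAt
    have hWdiff : DifferentiableOn ℝ W (interior (Icc s (s + T2))) := by
      rw [interior_Icc]
      exact fun x hx => ((hWderiv x (Ioo_subset_Icc_self hx)).differentiableAt).differentiableWithinAt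
    have key := (convex_Icc s (s + T2)).image_sub_le_mul_sub_of_deriv_le hWcont hWdiff
      (C := -(a * (1 - p)))
      (fun x hx => by
        rw [interior_Icc] at hx
        have hxI : x ∈ Icc s (s + T2) := Ioo_subset_Icc_self hx
        have hxpos : 0 < V x := hpos x (hsub hxI)
        rw [(hWderiv x hxI).deriv]
        have hA : 0 < V x ^ (1 - p - 1) := rpow_pos_of_pos hxpos _
        have hBpos : 0 < V x ^ p := rpow_pos_of_pos hxpos p
        have hAB : V x ^ (1 - p - 1) * V x ^ p = V x ^ (1 - p - 1 + p) := by
          rw [← Real.rpow_add hxpos]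
        have hexp : (1:ℝ) - p - 1 + p = 0 := by ring
        rw [hexp, Real.rpow_zero] at hAB
        have hqpos : 0 < V x ^ q := rpow_pos_of_pos hxpos q
        have hv' : deriv V x ≤ -a * V x ^ p := by
          have := hineq x (le_trans hsI.1 hxI.1) hxpos
          nlinarith
        have hfac : 0 ≤ (1 - p) * V x ^ (1 - p - 1) := by positivity
        have := mul_le_mul_of_nonneg_left hv' hfac
        calc (1 - p) * V x ^ (1 - p - 1) * deriv V x
            ≤ (1 - p) * V x ^ (1 - p - 1) * (-a * V x ^ p) := this
          _ = -(a * (1 - p)) := by linear_combination (-(a * (1 - p))) * hAB)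
      s (left_mem_Icc.mpr (by linarith)) (s + T2) (right_mem_Icc.mpr (by linarith)) (by linarith)
    have hCT2 : -(a * (1 - p)) * (s + T2 - s) = -1 := by
      rw [hT2def]; field_simp; ring
    rw [hCT2] at key
    have hWs : W s ≤ 1 := rpow_le_one (hVnn s) hVs1 (by linarith)
    have hWst : 0 < W (s + T2) :=
      rpow_pos_of_pos (hpos (s + T2) (hsub (right_mem_Icc.mpr (by linarith)))) _
    linarith
  obtain ⟨r, hrI, hVr⟩ := hA
  intro t ht
  exact hB r t hrI.1 (le_trans hrI.2 ht) hVr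
end

section
/- For deviated pursuit against a nonmaneuvering target, differentiating t_go = r·sec δ·[v + v_T·cos(γ_T − θ + δ)]/(v² − v_T²) with ξ = t_go − (T_f − t) gives ξ̇ = r²θ̇²sec²δ/(v² − v_T²) − (r²θ̇ sec²δ)/(v(v² − v_T²))·a when a_T = 0, where a is the interceptor's lateral acceleration, θ̇ is determined by r θ̇ = v_T sin(γ_T − θ) − v sin δ, ṙ = v_T cos(γ_T − θ) − v cos δ, γ̇ = a/v, δ = γ − θ, and γ_T is constant. In particular, choosing a = v θ̇ yields ξ̇ = 0. -/
/-!
Along any trajectory with `ṙ = v_T cos φ − v cos δ` and `r θ̇ = v_T sin φ − v sin δ`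
(`φ = γ_T − θ`), the time-to-go satisfies `ṫ_go = −1 − r² θ̇ δ̇ sec² δ / (v² − v_T²)`: after the
product rule, the `δ̇`-terms collapse by `sin δ · W − cos δ · v_T sin (φ + δ) = −r θ̇` and the
remaining ones by `ṙ W + v_T sin (φ + δ) · r θ̇ = −(v² − v_T²) cos δ`, where
`W = v + v_T cos (φ + δ)`. Substituting `δ̇ = γ̇ − θ̇ = a / v − θ̇` gives the claim.
-/

open Real

noncomputable def deviatedPursuitTimeToGo (v vT r φ δ : ℝ) : ℝ :=
  r * (cos δ)⁻¹ * (v + vT * cos (φ + δ)) / (v ^ 2 - vT ^ 2)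

theorem rangeRate_mul_add_losRate_mul (v vT φ δ : ℝ) :
    (vT * cos φ - v * cos δ) * (v + vT * cos (φ + δ)) +
        vT * sin (φ + δ) * (vT * sin φ - v * sin δ) = -(v ^ 2 - vT ^ 2) * cos δ := by
  rw [cos_add, sin_add]
  linear_combination vT ^ 2 * cos δ * sin_sq_add_cos_sq φ - v * vT * cos φ * sin_sq_add_cos_sq δ

theorem sin_mul_sub_cos_mul_eq_neg_losRate (v vT φ δ : ℝ) :
    sin δ * (v + vT * cos (φ + δ)) - cos δ * (vT * sin (φ + δ)) =
      -(vT * sin φ - v * sin δ) := by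
  rw [cos_add, sin_add]
  linear_combination -vT * sin φ * sin_sq_add_cos_sq δ

theorem hasDerivAt_deviatedPursuitTimeToGo {v vT γT : ℝ} {r θ δ : ℝ → ℝ} {θ' δ' t : ℝ}
    (hD : v ^ 2 - vT ^ 2 ≠ 0) (hcos : cos (δ t) ≠ 0)
    (hr : HasDerivAt r (vT * cos (γT - θ t) - v * cos (δ t)) t) (hθ : HasDerivAt θ θ' t)
    (hlos : r t * θ' = vT * sin (γT - θ t) - v * sin (δ t)) (hδ : HasDerivAt δ δ' t) :
    HasDerivAt (fun s => deviatedPursuitTimeToGo v vT (r s) (γT - θ s) (δ s))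
      (-1 - r t ^ 2 * θ' * δ' * (cos (δ t))⁻¹ ^ 2 / (v ^ 2 - vT ^ 2)) t := by
  have hφ : HasDerivAt (fun s => γT - θ s + δ s) (-θ' + δ') t := (hθ.const_sub γT).add hδ
  refine (((hr.mul (hδ.cos.inv hcos)).mul
    ((hφ.cos.const_mul vT).const_add v)).div_const (v ^ 2 - vT ^ 2)).congr_deriv ?_
  have h1 := rangeRate_mul_add_losRate_mul v vT (γT - θ t) (δ t)
  have h2 := sin_mul_sub_cos_mul_eq_neg_losRate v vT (γT - θ t) (δ t)
  simp only [Pi.mul_apply, Pi.inv_apply]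
  field_simp
  linear_combination cos (δ t) * h1 + r t * δ' * h2 +
    (r t * δ' + vT * cos (δ t) * sin (γT - θ t + δ t)) * hlos

theorem xi_dot_deviated_pursuit_general (v vT γT T_f : ℝ) (hvT : 0 ≤ vT) (hvvT : vT < v)
    (r θ γ a : ℝ → ℝ) (t : ℝ) (hrt : 0 < r t)
    (hδ : γ t - θ t ∈ Set.Ioo (-(Real.pi / 2)) (Real.pi / 2))
    (hr : HasDerivAt r (vT * Real.cos (γT - θ t) - v * Real.cos (γ t - θ t)) t)
    (hθ : HasDerivAt θ ((vT * Real.sin (γT - θ t) - v * Real.sin (γ t - θ t)) / r t) t)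
    (hγ : HasDerivAt γ (a t / v) t) :
    HasDerivAt
      (fun s => r s * (Real.cos (γ s - θ s))⁻¹ *
          (v + vT * Real.cos (γT - θ s + (γ s - θ s))) / (v ^ 2 - vT ^ 2) - (T_f - s))
      (r t ^ 2 * ((vT * Real.sin (γT - θ t) - v * Real.sin (γ t - θ t)) / r t) ^ 2 *
          ((Real.cos (γ t - θ t))⁻¹) ^ 2 / (v ^ 2 - vT ^ 2)
        - r t ^ 2 * ((vT * Real.sin (γT - θ t) - v * Real.sin (γ t - θ t)) / r t) *
            ((Real.cos (γ t - θ t))⁻¹) ^ 2 / (v * (v ^ 2 - vT ^ 2)) * a t) t ∧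
    (a t = v * ((vT * Real.sin (γT - θ t) - v * Real.sin (γ t - θ t)) / r t) →
      HasDerivAt
        (fun s => r s * (Real.cos (γ s - θ s))⁻¹ *
            (v + vT * Real.cos (γT - θ s + (γ s - θ s))) / (v ^ 2 - vT ^ 2) - (T_f - s))
        0 t) := by
  have hv : v ≠ 0 := by linarith
  have hD : v ^ 2 - vT ^ 2 ≠ 0 := by nlinarith
  have hlos : r t * ((vT * sin (γT - θ t) - v * sin (γ t - θ t)) / r t) =
      vT * sin (γT - θ t) - v * sin (γ t - θ t) := mul_div_cancel₀ _ hrt.ne'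
  have htgo := hasDerivAt_deviatedPursuitTimeToGo (δ := fun s => γ s - θ s) hD
    (cos_pos_of_mem_Ioo hδ).ne' hr hθ hlos (hγ.sub hθ)
  have hξ := htgo.sub ((hasDerivAt_id t).const_sub T_f)
  constructor
  · refine hξ.congr_deriv ?_
    field_simp
    ring
  · intro ha
    refine hξ.congr_deriv ?_
    rw [ha]
    field_simp
    ring

/-- Deviated pursuit against a nonmaneuvering target: with ξ = t_go − (T_f − t), one has
ξ̇ = r²θ̇² sec²δ/(v² − v_T²) − (r²θ̇ sec²δ)/(v(v² − v_T²))·a; in particular a = vθ̇ gives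
ξ̇ = 0. -/
theorem xi_dot_deviated_pursuit (v vT γT T_f : ℝ) (hv : 0 < v) (hvT : 0 ≤ vT) (hvvT : vT < v)
    (r θ γ a : ℝ → ℝ) (t : ℝ) (hrt : 0 < r t)
    (hδ : γ t - θ t ∈ Set.Ioo (-(Real.pi / 2)) (Real.pi / 2))
    (hr : HasDerivAt r (vT * Real.cos (γT - θ t) - v * Real.cos (γ t - θ t)) t)
    (hθ : HasDerivAt θ ((vT * Real.sin (γT - θ t) - v * Real.sin (γ t - θ t)) / r t) t)
    (hγ : HasDerivAt γ (a t / v) t) :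
    HasDerivAt
      (fun s => r s * (Real.cos (γ s - θ s))⁻¹ *
          (v + vT * Real.cos (γT - θ s + (γ s - θ s))) / (v ^ 2 - vT ^ 2) - (T_f - s))
      (r t ^ 2 * ((vT * Real.sin (γT - θ t) - v * Real.sin (γ t - θ t)) / r t) ^ 2 *
          ((Real.cos (γ t - θ t))⁻¹) ^ 2 / (v ^ 2 - vT ^ 2)
        - r t ^ 2 * ((vT * Real.sin (γT - θ t) - v * Real.sin (γ t - θ t)) / r t) *
            ((Real.cos (γ t - θ t))⁻¹) ^ 2 / (v * (v ^ 2 - vT ^ 2)) * a t) t ∧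
    (a t = v * ((vT * Real.sin (γT - θ t) - v * Real.sin (γ t - θ t)) / r t) →
      HasDerivAt
        (fun s => r s * (Real.cos (γ s - θ s))⁻¹ *
            (v + vT * Real.cos (γT - θ s + (γ s - θ s))) / (v ^ 2 - vT ^ 2) - (T_f - s))
        0 t) :=
  xi_dot_deviated_pursuit_general v vT γT T_f hvT hvvT r θ γ a t hrt hδ hr hθ hγ
end
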